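/- Let G be a graph and G* the construction from the Dalirrooyfard et al. reduction applied to G with pattern graph H and a minimum s-clique cover C = {C_1, ..., C_t} of H (using C_1 to form the independent-set copies of V_G). If G* contains a subgraph isomorphic to H, then G contains an s-clique. -/

import Mathlib

/-!
Suppose `G` has no `s`-clique. Forgetting the `G`-coordinate projects `G*` homomorphically onto
`H`, so the copy of `H` in `G*` yields an endomorphism `φ` of `H`. No `s`-clique of `H` is mapped
by `φ` into `C₁`: its copy would then lie in `V_G × C₁`, where adjacency requires adjacency of the
`G`-coordinates, which would therefore form an `s`-clique of `G`. Hence the preimages under `φ` of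
the members of `𝒞` other than `C₁` form an `s`-clique cover of `H` with fewer members than `𝒞`.
-/

/-- The graph `G*` of the Dalirrooyfard et al. reduction (see paper): copies
`V_G × {i}` of the vertices of `G` for `i ∈ C₁`, each an independent set, plus one
copy of each vertex of `V_H \ C₁`, with adjacency inherited from `H` and `G`. -/
def GstarGraph {VG VH : Type*} (G : SimpleGraph VG) (H : SimpleGraph VH) (C1 : Set VH) :
    SimpleGraph ((VG × C1) ⊕ {j : VH // j ∉ C1}) where
  Adj x y :=
    match x, y with
    | .inl (v, i), .inl (u, j) => H.Adj i j ∧ G.Adj v u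
    | .inl (_, i), .inr j => H.Adj i j
    | .inr i, .inl (_, j) => H.Adj i j
    | .inr i, .inr j => H.Adj i j
  symm := by
    constructor
    rintro (⟨v, i⟩ | i) (⟨u, j⟩ | j) h
    · exact ⟨h.1.symm, h.2.symm⟩
    · exact h.symm
    · exact h.symm
    · exact h.symm
  loopless := by
    constructor
    rintro (⟨v, i⟩ | i) h
    · exact H.loopless.irrefl _ h.1
    · exact H.loopless.irrefl _ h

/-- An `s`-clique cover of `H`. -/
def IsSCliqueCover {VH : Type*} [DecidableEq VH] (H : SimpleGraph VH) (s : ℕ)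
    (𝒞 : Finset (Finset VH)) : Prop :=
  (∀ K : Finset VH, H.IsNClique s K → ∃ C ∈ 𝒞, K ⊆ C) ∧
  (∀ C ∈ 𝒞, (H.induce (C : Set VH)).Colorable s)

open Finset

theorem SimpleGraph.IsNClique.image {α β : Type*} [DecidableEq β] {G : SimpleGraph α}
    {G' : SimpleGraph β} {n : ℕ} {s : Finset α} (h : G.IsNClique n s) (f : G →g G') :
    G'.IsNClique n (s.image f) := by
  refine ⟨?_, ?_⟩
  · rw [coe_image]
    rintro _ ⟨a, ha, rfl⟩ _ ⟨b, hb, rfl⟩ hab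
    exact f.map_adj (h.isClique ha hb (ne_of_apply_ne f hab))
  · rw [card_image_of_injOn, h.card_eq]
    intro a ha b hb hab
    by_contra hne
    exact (f.map_adj (h.isClique ha hb hne)).ne hab

namespace GstarGraph

variable {VG VH : Type*} {G : SimpleGraph VG} {H : SimpleGraph VH} {C1 : Set VH}

def proj : (VG × C1) ⊕ {j : VH // j ∉ C1} → VH :=
  Sum.elim (fun p => p.2) Subtype.val

def projHom : GstarGraph G H C1 →g H where
  toFun := proj
  map_rel' := by
    rintro (⟨v, i⟩ | i) (⟨u, j⟩ | j) h
    exacts [h.1, h, h, h]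

def fstHom : (GstarGraph G H C1).comap Sum.inl →g G where
  toFun := Prod.fst
  map_rel' h := h.2

theorem exists_isNClique_of_proj_mem {s : ℕ} {K : Finset ((VG × C1) ⊕ {j : VH // j ∉ C1})}
    (hK : (GstarGraph G H C1).IsNClique s K) (hC1 : ∀ x ∈ K, proj x ∈ C1) :
    ∃ K' : Finset VG, G.IsNClique s K' := by
  classical
  have hinl : ∀ x ∈ K, x ∈ Set.range Sum.inl := by
    rintro (p | ⟨j, hj⟩) hx
    · exact ⟨p, rfl⟩
    · exact absurd (hC1 _ hx) hj
  set K₀ := K.preimage Sum.inl Sum.inl_injective.injOn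
  have hK₀ : ((GstarGraph G H C1).comap Sum.inl).IsNClique s K₀ := by
    refine ⟨fun p hp q hq hpq => ?_, ?_⟩
    · exact hK.isClique (mem_preimage.1 hp) (mem_preimage.1 hq) (Sum.inl_injective.ne hpq)
    · rw [card_preimage, filter_true_of_mem hinl, hK.card_eq]
  exact ⟨_, hK₀.image fstHom⟩

end GstarGraph

theorem isSCliqueCover_image_filter {V V' : Type*} [DecidableEq V] [DecidableEq V']
    {H : SimpleGraph V} {H' : SimpleGraph V'} {s : ℕ} (φ : H' →g H) {W : Finset V'}
    (hW : ∀ K, H'.IsNClique s K → K ⊆ W) {𝒞 : Finset (Finset V)}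
    (hcol : ∀ C ∈ 𝒞, (H.induce (C : Set V)).Colorable s)
    (hcov : ∀ K, H'.IsNClique s K → ∃ C ∈ 𝒞, K.image φ ⊆ C) :
    IsSCliqueCover H' s (𝒞.image fun C => W.filter (φ · ∈ C)) := by
  refine ⟨fun K hK => ?_, ?_⟩
  · obtain ⟨C, hC, hKC⟩ := hcov K hK
    refine ⟨_, mem_image_of_mem _ hC, fun x hx => mem_filter.2 ⟨hW K hK hx, ?_⟩⟩
    exact hKC (mem_image_of_mem φ hx)
  · simp only [forall_mem_image]
    intro C hC
    exact (hcol C hC).of_hom (SimpleGraph.induceHom φ fun x hx => (mem_filter.1 hx).2)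

theorem Gstar_subgraph_gives_clique_general {VG VH : Type*} [DecidableEq VH]
    (G : SimpleGraph VG) (H : SimpleGraph VH) (s : ℕ)
    (𝒞 : Finset (Finset VH)) (C1 : Finset VH) (hC1 : C1 ∈ 𝒞)
    (hcover : IsSCliqueCover H s 𝒞)
    (hmin : ∀ 𝒟 : Finset (Finset VH), IsSCliqueCover H s 𝒟 → 𝒞.card ≤ 𝒟.card)
    (hsub : ∃ f : VH → (VG × (C1 : Set VH)) ⊕ {j : VH // j ∉ (C1 : Set VH)},
      Function.Injective f ∧
      ∀ i j : VH, H.Adj i j → (GstarGraph G H (C1 : Set VH)).Adj (f i) (f j)) :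
    ∃ K : Finset VG, G.IsNClique s K := by
  classical
  by_contra! hG
  obtain ⟨f, -, hf⟩ := hsub
  let F : H →g GstarGraph G H (C1 : Set VH) := ⟨f, hf _ _⟩
  let φ : H →g H := GstarGraph.projHom.comp F
  have hcovered : ∀ K, H.IsNClique s K → ∃ C ∈ 𝒞.erase C1, K.image φ ⊆ C := by
    intro K hK
    obtain ⟨C, hC, hKC⟩ := hcover.1 _ (hK.image φ)
    refine ⟨C, mem_erase.2 ⟨?_, hC⟩, hKC⟩
    rintro rfl
    obtain ⟨K', hK'⟩ := GstarGraph.exists_isNClique_of_proj_mem (hK.image F) <|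
      forall_mem_image.2 fun a ha => hKC (mem_image_of_mem φ ha)
    exact hG K' hK'
  -- Preimages under `φ` may be infinite; cutting them down to `⋃ 𝒞` keeps every `s`-clique.
  have hW : ∀ K, H.IsNClique s K → K ⊆ 𝒞.sup id := fun K hK =>
    (hcover.1 K hK).elim fun C ⟨hC, hKC⟩ => hKC.trans (le_sup (f := id) hC)
  have hcover' := isSCliqueCover_image_filter φ hW
    (fun C hC => hcover.2 C (mem_of_mem_erase hC)) hcovered
  exact (hmin _ hcover').not_gt (card_image_le.trans_lt (card_erase_lt_of_mem hC1))

/-- If `𝒞` is a minimum `s`-clique cover of the pattern graph `H`, `C₁ ∈ 𝒞`, and the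
graph `G*` built from `G`, `H` and `C₁` contains a subgraph isomorphic to `H`
(i.e. there is an injective homomorphism of `H` into `G*`), then `G` contains an
`s`-clique. -/
theorem Gstar_subgraph_gives_clique {VG VH : Type*} [DecidableEq VG] [DecidableEq VH]
    (G : SimpleGraph VG) (H : SimpleGraph VH) (s : ℕ) (hs : 0 < s)
    (𝒞 : Finset (Finset VH)) (C1 : Finset VH) (hC1 : C1 ∈ 𝒞)
    (hcover : IsSCliqueCover H s 𝒞)
    (hmin : ∀ 𝒟 : Finset (Finset VH), IsSCliqueCover H s 𝒟 → 𝒞.card ≤ 𝒟.card)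
    (hsub : ∃ f : VH → (VG × (C1 : Set VH)) ⊕ {j : VH // j ∉ (C1 : Set VH)},
      Function.Injective f ∧
      ∀ i j : VH, H.Adj i j → (GstarGraph G H (C1 : Set VH)).Adj (f i) (f j)) :
    ∃ K : Finset VG, G.IsNClique s K :=
  Gstar_subgraph_gives_clique_general G H s 𝒞 C1 hC1 hcover hmin hsub
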